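/- Let Γ be a graph, ε an end of Γ, and let R, S, T be ε-rays with pairwise disjoint tails. If S separates R from T, then T does not separate R from S, and R does not separate S from T. -/

import Mathlib

set_option autoImplicit false

namespace Ubiquity

variable {V W T : Type}

/-- A ray (one-way infinite path) in a graph `G`. -/
structure Ray (G : SimpleGraph V) where
  f : ℕ → V
  inj : Function.Injective f
  adj : ∀ n : ℕ, G.Adj (f n) (f (n + 1))

/-- The vertex set of a ray. -/
def Ray.verts {G : SimpleGraph V} (R : Ray G) : Set V := Set.range R.f

/-- The tail of a ray from its `k`-th vertex on. -/
def Ray.tail {G : SimpleGraph V} (R : Ray G) (k : ℕ) : Ray G where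
  f := fun n => R.f (n + k)
  inj := fun a b h => by have := R.inj h; omega
  adj := fun n => by
    show G.Adj (R.f (n + k)) (R.f (n + 1 + k))
    have h : n + 1 + k = n + k + 1 := by omega
    rw [h]
    exact R.adj (n + k)

/-- `R'` is a tail of the ray `R`. -/
def Ray.IsTailOf {G : SimpleGraph V} (R' R : Ray G) : Prop :=
  ∃ k : ℕ, ∀ n : ℕ, R'.f n = R.f (n + k)

/-- A path in `G` from a vertex of `A` to a vertex of `B`. -/
structure PathBetween (G : SimpleGraph V) (A B : Set V) where
  first : V
  last : V
  walk : G.Walk first last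
  isPath : walk.IsPath
  first_mem : first ∈ A
  last_mem : last ∈ B

/-- The vertex set of such a path. -/
def PathBetween.verts {G : SimpleGraph V} {A B : Set V} (P : PathBetween G A B) : Set V :=
  {v | v ∈ P.walk.support}

/-- Two rays are equivalent in `G − X`: there are infinitely many pairwise
vertex-disjoint paths between them, all avoiding `X`. -/
def RayEquivAvoiding (G : SimpleGraph V) (X : Set V) (R S : Ray G) : Prop :=
  ∃ P : ℕ → PathBetween G R.verts S.verts,
    (∀ n : ℕ, ∀ v ∈ (P n).verts, v ∉ X) ∧
    ∀ m n : ℕ, m ≠ n → Disjoint (P m).verts (P n).verts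

/-- Two rays are equivalent: there are infinitely many pairwise vertex-disjoint
paths between them. -/
def RayEquiv (G : SimpleGraph V) (R S : Ray G) : Prop := RayEquivAvoiding G ∅ R S

/-- `ε` is an end of `G`: an equivalence class of rays. -/
def IsEnd (G : SimpleGraph V) (ε : Set (Ray G)) : Prop :=
  ε.Nonempty ∧ ∀ R ∈ ε, ∀ S : Ray G, S ∈ ε ↔ RayEquiv G R S

/-- An end of `G − X`, viewed as an equivalence class of rays of `G` avoiding `X`. -/
def IsEndAvoiding (G : SimpleGraph V) (X : Set V) (δ : Set (Ray G)) : Prop :=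
  δ.Nonempty ∧ (∀ R ∈ δ, Disjoint R.verts X) ∧
    ∀ R ∈ δ, ∀ S : Ray G, Disjoint S.verts X → (S ∈ δ ↔ RayEquivAvoiding G X R S)

/-- A family of pairwise disjoint rays, all belonging to `ε`. -/
def DisjointRayFamily {I : Type} (G : SimpleGraph V) (ε : Set (Ray G)) (R : I → Ray G) : Prop :=
  (∀ i, R i ∈ ε) ∧ ∀ i j : I, i ≠ j → Disjoint (R i).verts (R j).verts

/-- The end `ε` has finite degree (is thin): for some `k` there is no family of
`k+1` pairwise disjoint `ε`-rays. -/
def ThinEnd (G : SimpleGraph V) (ε : Set (Ray G)) : Prop :=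
  ∃ k : ℕ, ∀ R : Fin (k + 1) → Ray G, (∀ i, R i ∈ ε) →
    ¬ ∀ i j, i ≠ j → Disjoint (R i).verts (R j).verts

/-- The end `ε` is thick: it contains arbitrarily many disjoint rays. -/
def ThickEnd (G : SimpleGraph V) (ε : Set (Ray G)) : Prop :=
  ∀ n : ℕ, ∃ R : Fin n → Ray G, DisjointRayFamily G ε R

/-- `G` is locally finite. -/
def LocFin (G : SimpleGraph V) : Prop := ∀ v : V, (G.neighborSet v).Finite

/-- An inflated copy of `G` inside `Γ`: a subgraph `H` of `Γ` with a map `φ`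
whose branch sets are nonempty and connected, such that there is an edge of `H`
between the branch sets of `v` and `w` iff `vw ∈ E(G)`, this edge being unique. -/
structure InflatedCopy (G : SimpleGraph V) (Γ : SimpleGraph W) where
  H : Γ.Subgraph
  φ : W → V
  branch_nonempty : ∀ v : V, ∃ w ∈ H.verts, φ w = v
  branch_connected : ∀ v : V, (H.induce {w ∈ H.verts | φ w = v}).Connected
  adj_of_edge : ∀ ⦃a b : W⦄, H.Adj a b → φ a ≠ φ b → G.Adj (φ a) (φ b)
  edge_of_adj : ∀ ⦃v w : V⦄, G.Adj v w → ∃ a b : W, H.Adj a b ∧ φ a = v ∧ φ b = w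
  edge_unique : ∀ ⦃v w : V⦄, G.Adj v w → ∀ a b a' b' : W, H.Adj a b → H.Adj a' b' →
    φ a = v → φ b = w → φ a' = v → φ b' = w → a = a' ∧ b = b'

/-- The branch set of `v` in an inflated copy. -/
def InflatedCopy.branch {G : SimpleGraph V} {Γ : SimpleGraph W} (Hc : InflatedCopy G Γ)
    (v : V) : Set W := {w ∈ Hc.H.verts | Hc.φ w = v}

/-- A tidy inflated copy: each branch set induces a tree, finite whenever the
corresponding vertex has finite degree. -/
def InflatedCopy.Tidy {G : SimpleGraph V} {Γ : SimpleGraph W} (Hc : InflatedCopy G Γ) : Prop :=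
  ∀ v : V, (Hc.H.induce (Hc.branch v)).coe.IsTree ∧
    ((G.neighborSet v).Finite → (Hc.branch v).Finite)

/-- `G` is a minor of `Γ`. -/
def IsMinor (G : SimpleGraph V) (Γ : SimpleGraph W) : Prop := Nonempty (InflatedCopy G Γ)

/-- The disjoint union of `ι` many copies of `G`. -/
def copies (ι : Type) (G : SimpleGraph V) : SimpleGraph (ι × V) where
  Adj a b := a.1 = b.1 ∧ G.Adj a.2 b.2
  symm := ⟨fun _ _ h => ⟨h.1.symm, h.2.symm⟩⟩
  loopless := ⟨fun a h => G.loopless.irrefl a.2 h.2⟩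

/-- `a` and `b` are joined by a walk of `K` avoiding the set `X`. -/
def ReachAvoid {α : Type} (K : SimpleGraph α) (X : Set α) (a b : α) : Prop :=
  ∃ w : K.Walk a b, ∀ x ∈ w.support, x ∉ X


/-! ### Linkages and transition functions -/

/-- A linkage from the family `R` to the family `S` of disjoint rays: a family
of disjoint paths `path i` from a vertex of `R i` to a vertex of `S (σ i)` such
that the concatenated rays form a family of disjoint rays. -/
structure Linkage (Γ : SimpleGraph W) {I J : Type} (R : I → Ray Γ) (S : J → Ray Γ) where
  σ : I → J
  inj : Function.Injective σ
  exit : I → ℕ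
  entry : I → ℕ
  path : ∀ i : I, Γ.Walk ((R i).f (exit i)) ((S (σ i)).f (entry i))
  isPath : ∀ i : I, (path i).IsPath
  meet_init : ∀ i : I, ∀ v ∈ (path i).support,
    (∃ k ≤ exit i, (R i).f k = v) → v = (R i).f (exit i)
  meet_tail : ∀ i : I, ∀ v ∈ (path i).support,
    (∃ k : ℕ, entry i ≤ k ∧ (S (σ i)).f k = v) → v = (S (σ i)).f (entry i)
  init_tail : ∀ i : I, ∀ k ≤ exit i, ∀ k' : ℕ, entry i ≤ k' →
    (R i).f k = (S (σ i)).f k' → k = exit i ∧ k' = entry i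
  disj : ∀ i j : I, i ≠ j → ∀ v : W,
    ((∃ k ≤ exit i, (R i).f k = v) ∨ v ∈ (path i).support ∨
      ∃ k : ℕ, entry i ≤ k ∧ (S (σ i)).f k = v) →
    ((∃ k ≤ exit j, (R j).f k = v) ∨ v ∈ (path j).support ∨
      ∃ k : ℕ, entry j ≤ k ∧ (S (σ j)).f k = v) → False

/-- The vertex set of the `i`-th concatenated ray of a linkage. -/
def Linkage.rverts {Γ : SimpleGraph W} {I J : Type} {R : I → Ray Γ} {S : J → Ray Γ}
    (L : Linkage Γ R S) (i : I) : Set W :=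
  {v | (∃ k ≤ L.exit i, (R i).f k = v) ∨ v ∈ (L.path i).support ∨
    ∃ k : ℕ, L.entry i ≤ k ∧ (S (L.σ i)).f k = v}

/-- A linkage is after `X` if `X` meets each concatenated ray only within the
initial segment of the corresponding ray of `R`. -/
def Linkage.After {Γ : SimpleGraph W} {I J : Type} {R : I → Ray Γ} {S : J → Ray Γ}
    (L : Linkage Γ R S) (X : Set W) : Prop :=
  ∀ i : I, ∀ v ∈ X, v ∈ L.rverts i → ∃ k ≤ L.exit i, (R i).f k = v

/-- `σ` is a transition function from `R` to `S`: for every finite vertex set `X`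
there is a linkage from `R` to `S` after `X` inducing `σ`. -/
def IsTransitionFunction (Γ : SimpleGraph W) {I J : Type} (R : I → Ray Γ) (S : J → Ray Γ)
    (σ : I → J) : Prop :=
  ∀ X : Set W, X.Finite → ∃ L : Linkage Γ R S, L.σ = σ ∧ L.After X

/-- A linkage is transitional if the function it induces is a transition function. -/
def Linkage.Transitional {Γ : SimpleGraph W} {I J : Type} {R : I → Ray Γ} {S : J → Ray Γ}
    (L : Linkage Γ R S) : Prop := IsTransitionFunction Γ R S L.σ

/-! ### Ray graphs and separation -/

/-- There are infinitely many disjoint paths from `R i` to `R j` meeting no other `R k`. -/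
def LinkedRays (Γ : SimpleGraph W) {I : Type} (R : I → Ray Γ) (i j : I) : Prop :=
  ∃ P : ℕ → PathBetween Γ (R i).verts (R j).verts,
    (∀ m n : ℕ, m ≠ n → Disjoint (P m).verts (P n).verts) ∧
    ∀ n : ℕ, ∀ k : I, k ≠ i → k ≠ j → Disjoint (P n).verts (R k).verts

/-- The ray graph of a family of disjoint rays. -/
def rayGraph (Γ : SimpleGraph W) {I : Type} (R : I → Ray Γ) : SimpleGraph I where
  Adj i j := i ≠ j ∧ (LinkedRays Γ R i j ∨ LinkedRays Γ R j i)
  symm := ⟨fun _ _ h => ⟨h.1.symm, h.2.symm⟩⟩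
  loopless := ⟨fun _ h => h.1 rfl⟩

/-- `S` separates `R` from `T'`: the tails of `R` and `T'` disjoint from `S`
belong to different ends of `Γ − V(S)`. -/
def SeparatesRay (Γ : SimpleGraph W) (S R T' : Ray Γ) : Prop :=
  ∀ R' T'' : Ray Γ, R'.IsTailOf R → T''.IsTailOf T' →
    Disjoint R'.verts S.verts → Disjoint T''.verts S.verts →
    ¬ RayEquivAvoiding Γ S.verts R' T''

/-- `K − c` has precisely two connected components, each of size at least `m`. -/
def TwoCompsAtLeast {I : Type} (K : SimpleGraph I) (c : I) (m : ℕ) : Prop :=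
  ∃ A B : Set I, A.Nonempty ∧ B.Nonempty ∧ Disjoint A B ∧ A ∪ B = {i | i ≠ c} ∧
    (∀ a ∈ A, ∀ b ∈ A, ReachAvoid K {c} a b) ∧
    (∀ a ∈ B, ∀ b ∈ B, ReachAvoid K {c} a b) ∧
    (∀ a ∈ A, ∀ b ∈ B, ¬ ReachAvoid K {c} a b) ∧
    (m : ℕ∞) ≤ A.encard ∧ (m : ℕ∞) ≤ B.encard

/-- `i` is an inner vertex of the (nodup) list `L`. -/
def IsInnerListVertex {n : ℕ} (L : List (Fin n)) (i : Fin n) : Prop :=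
  i ∈ L ∧ 0 < L.idxOf i ∧ L.idxOf i + 1 < L.length

/-- The end `ε` splits in `Γ − X` into the two ends `δ` and `δ'`. -/
def SplitsInto (Γ : SimpleGraph W) (ε : Set (Ray Γ)) (X : Set W) (δ δ' : Set (Ray Γ)) : Prop :=
  IsEndAvoiding Γ X δ ∧ IsEndAvoiding Γ X δ' ∧ δ ≠ δ' ∧
    ∀ S ∈ ε, Disjoint (Ray.verts S) X → S ∈ δ ∪ δ'

/-- `δ` is a sub-end of `δ'`: every ray of `δ` has a tail in `δ'`. -/
def SubEnd (Γ : SimpleGraph W) (δ δ' : Set (Ray Γ)) : Prop :=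
  ∀ R ∈ δ, ∃ R' : Ray Γ, R'.IsTailOf R ∧ R' ∈ δ'

/-! ### Half-grid-like ends -/

/-- A witness that the thick end `ε` of `Γ` is half-grid-like: there is `N ∈ ℕ`
and a choice of (correctly oriented) central path for each family of disjoint
`ε`-rays such that: for families of size at least `N + 2` the central path is a
bare path of the ray graph containing all but at most `N` of its vertices, every
vertex whose deletion leaves precisely two components of size at least `N + 1`
is an inner vertex of the central path, and every transition function between
families of at least `N + 3` disjoint `ε`-rays maps central path vertices to
central path vertices preserving the correct orientation. -/
structure HalfGridLike (Γ : SimpleGraph W) (ε : Set (Ray Γ)) where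
  isEnd : IsEnd Γ ε
  thick : ThickEnd Γ ε
  N : ℕ
  central : ∀ {n : ℕ}, (Fin n → Ray Γ) → List (Fin n)
  central_nodup : ∀ {n : ℕ} (R : Fin n → Ray Γ), DisjointRayFamily Γ ε R → N + 2 ≤ n →
    (central R).Nodup
  central_chain : ∀ {n : ℕ} (R : Fin n → Ray Γ), DisjointRayFamily Γ ε R → N + 2 ≤ n →
    (central R).Chain' (rayGraph Γ R).Adj
  central_large : ∀ {n : ℕ} (R : Fin n → Ray Γ), DisjointRayFamily Γ ε R → N + 2 ≤ n →
    n ≤ (central R).length + N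
  central_bare : ∀ {n : ℕ} (R : Fin n → Ray Γ), DisjointRayFamily Γ ε R → N + 2 ≤ n →
    ∀ i : Fin n, IsInnerListVertex (central R) i → ((rayGraph Γ R).neighborSet i).encard = 2
  central_inner : ∀ {n : ℕ} (R : Fin n → Ray Γ), DisjointRayFamily Γ ε R → N + 2 ≤ n →
    ∀ c : Fin n, TwoCompsAtLeast (rayGraph Γ R) c (N + 1) → IsInnerListVertex (central R) c
  central_map : ∀ {n m : ℕ} (R : Fin n → Ray Γ) (S : Fin m → Ray Γ),
    DisjointRayFamily Γ ε R → DisjointRayFamily Γ ε S → N + 3 ≤ n → N + 3 ≤ m →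
    ∀ σ : Fin n → Fin m, IsTransitionFunction Γ R S σ →
    ∀ i ∈ central R, σ i ∈ central S
  central_order : ∀ {n m : ℕ} (R : Fin n → Ray Γ) (S : Fin m → Ray Γ),
    DisjointRayFamily Γ ε R → DisjointRayFamily Γ ε S → N + 3 ≤ n → N + 3 ≤ m →
    ∀ σ : Fin n → Fin m, IsTransitionFunction Γ R S σ →
    ∀ i ∈ central R, ∀ j ∈ central R, (central R).idxOf i < (central R).idxOf j →
      (central S).idxOf (σ i) < (central S).idxOf (σ j)

/-- A core ray of the half-grid-like end `ε`. -/
def IsCoreRay {Γ : SimpleGraph W} {ε : Set (Ray Γ)} (hg : HalfGridLike Γ ε) (R : Ray Γ) : Prop :=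
  R ∈ ε ∧ ∃ (n : ℕ) (F : Fin n → Ray Γ) (c : Fin n),
    DisjointRayFamily Γ ε F ∧ F c = R ∧ TwoCompsAtLeast (rayGraph Γ F) c (hg.N + 1)

/-- `(δ, δ')` is the pair of ends `(⊤(F c, F), ⊥(F c, F))` of `Γ − V(F c)`. -/
def IsTopBotPair {Γ : SimpleGraph W} {ε : Set (Ray Γ)} (hg : HalfGridLike Γ ε)
    {n : ℕ} (F : Fin n → Ray Γ) (c : Fin n) (δ δ' : Set (Ray Γ)) : Prop :=
  IsEndAvoiding Γ (F c).verts δ ∧ IsEndAvoiding Γ (F c).verts δ' ∧ δ ≠ δ' ∧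
  (∀ S ∈ ε, Disjoint (Ray.verts S) (F c).verts → S ∈ δ ∪ δ') ∧
  (∀ i : Fin n, i ∈ hg.central F →
    (hg.central F).idxOf i < (hg.central F).idxOf c → F i ∈ δ) ∧
  ∀ i : Fin n, i ∈ hg.central F →
    (hg.central F).idxOf c < (hg.central F).idxOf i → F i ∈ δ'

/-- `R ∈ ⊤(ε, S)`: for some family witnessing `S` on a central path, `R` lies in
the top end of `Γ − V(S)`. -/
def InTop {Γ : SimpleGraph W} {ε : Set (Ray Γ)} (hg : HalfGridLike Γ ε) (S R : Ray Γ) : Prop :=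
  ∃ (n : ℕ) (F : Fin n → Ray Γ) (c : Fin n) (δ δ' : Set (Ray Γ)),
    DisjointRayFamily Γ ε F ∧ hg.N + 2 ≤ n ∧ F c = S ∧ c ∈ hg.central F ∧
    IsTopBotPair hg F c δ δ' ∧ R ∈ δ

/-- The relation `≤_ε` on core rays. -/
def coreLE {Γ : SimpleGraph W} {ε : Set (Ray Γ)} (hg : HalfGridLike Γ ε) (R S : Ray Γ) : Prop :=
  R = S ∨ ∃ a b : ℕ, Disjoint (R.tail a).verts (S.tail b).verts ∧
    InTop hg (S.tail b) (R.tail a)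

/-- `R̄` (with inclusion `ι`) is an extension of the family `R` of core rays as in
Lemma 5.19: every ray of `R` disconnects the ray graph of `R̄` into exactly two
components of size at least `N + 1` and is an inner vertex of the central path,
and `|R̄| = |R| + 2N + 2`. -/
def IsBarExtension {Γ : SimpleGraph W} {ε : Set (Ray Γ)} (hg : HalfGridLike Γ ε)
    {k : ℕ} (R : Fin k → Ray Γ) (Rbar : Fin (k + (2 * hg.N + 2)) → Ray Γ)
    (ι : Fin k ↪ Fin (k + (2 * hg.N + 2))) : Prop :=
  DisjointRayFamily Γ ε Rbar ∧ (∀ i, Rbar (ι i) = R i) ∧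
  (∀ i : Fin k, TwoCompsAtLeast (rayGraph Γ Rbar) (ι i) (hg.N + 1)) ∧
  ∀ i : Fin k, IsInnerListVertex (hg.central Rbar) (ι i)

/-- A linkage is preserving on the subfamily `R` (included via `ι`): it links the
rays of `R` to core rays and preserves the order `≤_ε`. -/
def PreservingOn {Γ : SimpleGraph W} {ε : Set (Ray Γ)} (hg : HalfGridLike Γ ε)
    {k p m : ℕ} (R : Fin k → Ray Γ) (ι : Fin k ↪ Fin p)
    {Rbar : Fin p → Ray Γ} {S : Fin m → Ray Γ} (L : Linkage Γ Rbar S) : Prop :=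
  (∀ i : Fin k, IsCoreRay hg (S (L.σ (ι i)))) ∧
  ∀ i j : Fin k, coreLE hg (R i) (R j) → coreLE hg (S (L.σ (ι i))) (S (L.σ (ι j)))


/-! ### Tree-decompositions -/

/-- A tree-decomposition of `G` with decomposition tree on the vertex type `T`. -/
structure TreeDecomp (G : SimpleGraph V) (T : Type) where
  tree : SimpleGraph T
  isTree : tree.IsTree
  part : T → Set V
  cover : ∀ v : V, ∃ t : T, v ∈ part t
  edge_cover : ∀ ⦃u v : V⦄, G.Adj u v → ∃ t : T, u ∈ part t ∧ v ∈ part t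
  interpolate : ∀ ⦃t₁ t₂ t₃ : T⦄ (p : tree.Walk t₁ t₃), p.IsPath → t₂ ∈ p.support →
    part t₁ ∩ part t₃ ⊆ part t₂

/-- A rooted tree-decomposition. -/
structure RootedTreeDecomp (G : SimpleGraph V) (T : Type) extends TreeDecomp G T where
  root : T

/-- An edge of the decomposition tree, oriented away from the root: `tgt` is the
endvertex farther from the root. -/
structure RootedTreeDecomp.Edge {G : SimpleGraph V} {T : Type} (D : RootedTreeDecomp G T) where
  src : T
  tgt : T
  adj : D.tree.Adj src tgt
  away : D.tree.dist D.root tgt = D.tree.dist D.root src + 1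

/-- The vertex set of the component `T_{e⁺}` of `T − e` containing `e.tgt`. -/
def RootedTreeDecomp.above {G : SimpleGraph V} {T : Type} (D : RootedTreeDecomp G T)
    (e : D.Edge) : Set T :=
  {t | ∃ w : D.tree.Walk t e.tgt, e.src ∉ w.support}

/-- The bough `B(e)`: the union of the parts indexed by `T_{e⁺}`. -/
def RootedTreeDecomp.bough {G : SimpleGraph V} {T : Type} (D : RootedTreeDecomp G T)
    (e : D.Edge) : Set V :=
  {v | ∃ t ∈ D.above e, v ∈ D.part t}

/-- The set `A(e)`: the union of the parts indexed outside `T_{e⁺}`. -/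
def RootedTreeDecomp.sideA {G : SimpleGraph V} {T : Type} (D : RootedTreeDecomp G T)
    (e : D.Edge) : Set V :=
  {v | ∃ t : T, t ∉ D.above e ∧ v ∈ D.part t}

/-- The separator `S(e) = V_{e⁻} ∩ V_{e⁺}`. -/
def RootedTreeDecomp.sep {G : SimpleGraph V} {T : Type} (D : RootedTreeDecomp G T)
    (e : D.Edge) : Set V :=
  D.part e.src ∩ D.part e.tgt

/-- The graph `Ḡ[B(e)]`: the induced graph on `B(e)` with all edges between
vertices of `S(e)` deleted. -/
def RootedTreeDecomp.barB {G : SimpleGraph V} {T : Type} (D : RootedTreeDecomp G T)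
    (e : D.Edge) : SimpleGraph (D.bough e) where
  Adj a b := G.Adj ↑a ↑b ∧ ¬((↑a : V) ∈ D.sep e ∧ (↑b : V) ∈ D.sep e)
  symm := ⟨fun _ _ h => ⟨h.1.symm, fun hc => h.2 ⟨hc.2, hc.1⟩⟩⟩
  loopless := ⟨fun a h => G.loopless.irrefl ↑a h.1⟩

/-- A witness for the self-similarity of the bough `B(e)` along the family of
rays `Rfam`, of distance at least `n`: an edge `e'` of `T_{e⁺}` at distance at
least `n`, together with an inflated copy `Wcopy` of `Ḡ[B(e)]` inside `G[B(e')]`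
such that each ray `Rfam s` (for `s ∈ S(e)`) meets `S(e')` only inside the
branch set of `s`. -/
structure SelfSimilarityWitness {G : SimpleGraph V} {T : Type} (D : RootedTreeDecomp G T)
    (e : D.Edge) (Rfam : V → Ray G) (n : ℕ) where
  e' : D.Edge
  habove : e'.src ∈ D.above e
  hfar : n ≤ D.tree.dist e.src e'.src
  Wcopy : InflatedCopy (D.barB e) G
  hsub : Wcopy.H.verts ⊆ D.bough e'
  hmeets : ∀ s ∈ D.sep e, ∃ k : ℕ, (Rfam s).f k ∈ D.sep e'
  hbranch : ∀ s ∈ D.sep e, ∀ k : ℕ, (Rfam s).f k ∈ D.sep e' →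
    (Rfam s).f k ∈ Wcopy.H.verts ∧ (↑(Wcopy.φ ((Rfam s).f k)) : V) = s

/-- The bough `B(e)` is self-similar towards the end `ω` of `G`. -/
def BoughSelfSimilar {G : SimpleGraph V} {T : Type} (D : RootedTreeDecomp G T) (e : D.Edge)
    (ω : Set (Ray G)) : Prop :=
  ∃ Rfam : V → Ray G,
    (∀ s ∈ D.sep e, (Rfam s).f 0 = s ∧ Rfam s ∈ ω) ∧
    (∀ s ∈ D.sep e, ∀ s' ∈ D.sep e, s ≠ s' → Disjoint (Rfam s).verts (Rfam s').verts) ∧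
    ∀ n : ℕ, Nonempty (SelfSimilarityWitness D e Rfam n)

/-- An extensive tree-decomposition: the tree is locally finite, every part is
finite, every vertex lies in finitely many parts, and every bough is
self-similar towards some end of `G`. -/
def Extensive {G : SimpleGraph V} {T : Type} (D : RootedTreeDecomp G T) : Prop :=
  (∀ t : T, (D.tree.neighborSet t).Finite) ∧
  (∀ t : T, (D.part t).Finite) ∧
  (∀ v : V, {t : T | v ∈ D.part t}.Finite) ∧
  ∀ e : D.Edge, ∃ ω : Set (Ray G), IsEnd G ω ∧ BoughSelfSimilar D e ω

/-- A lean tree-decomposition. -/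
def LeanTD {G : SimpleGraph V} {T : Type} (D : RootedTreeDecomp G T) : Prop :=
  ∀ (k : ℕ) (t₁ t₂ : T) (X₁ X₂ : Set V), X₁ ⊆ D.part t₁ → X₂ ⊆ D.part t₂ →
    (k : ℕ∞) ≤ X₁.encard → (k : ℕ∞) ≤ X₂.encard →
    (∃ P : Fin k → PathBetween G X₁ X₂, ∀ i j, i ≠ j → Disjoint (P i).verts (P j).verts) ∨
    ∃ t : T, (∀ p : D.tree.Walk t₁ t₂, p.IsPath → t ∈ p.support) ∧ (D.part t).encard < (k : ℕ∞)

/-- The ray `0 – 1 – 2 – ⋯` as a graph on `ℕ`. -/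
def pathGraphN : SimpleGraph ℕ where
  Adj a b := a + 1 = b ∨ b + 1 = a
  symm := ⟨fun _ _ h => h.symm⟩
  loopless := ⟨fun a h => by rcases h with h | h <;> omega⟩

/-! ### Pullbacks and end components -/

/-- `S` is a pullback of the ray `R` of `G` to the inflated copy `Hc`: `S`
traverses the branch sets of the vertices of `R` consecutively and in order. -/
def IsPullbackRay {G : SimpleGraph V} {Γ : SimpleGraph W} (Hc : InflatedCopy G Γ)
    (R : Ray G) (S : Ray Γ) : Prop :=
  ∃ g : ℕ → ℕ, Monotone g ∧ g 0 = 0 ∧ (∀ m : ℕ, ∃ k, m ≤ g k) ∧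
    (∀ k, g (k + 1) ≤ g k + 1) ∧
    ∀ k, S.f k ∈ Hc.H.verts ∧ Hc.φ (S.f k) = R.f (g k)

/-- The component `C(X, δ)` of `Γ − X` in which every ray of `δ` has a tail. -/
def endComp (Γ : SimpleGraph W) (X : Set W) (δ : Set (Ray Γ)) : Set W :=
  {w | ∃ R ∈ δ, ∃ k : ℕ, (∀ j : ℕ, k ≤ j → R.f j ∉ X) ∧ ReachAvoid Γ X w (R.f k)}

/-! If `R` and `S` are `ε`-rays, infinitely many disjoint `R`–`S` paths avoid the (finite)
initial segments of `R`, `S`, `T'`. Cutting each of them at its first vertex on the tail of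
`S` or of `T'`, infinitely many end on one of the two tails: in the first case `R` and `S`
are equivalent in `Γ − T'`, in the second `R` and `T'` are equivalent in `Γ − S`. So `T'`
fails to separate `R` from `S` unless `S` fails to separate `R` from `T'`; the second claim
is the same argument applied to `T'` and `S`. -/

section Separation

open Filter

variable {Γ : SimpleGraph W}

lemma Ray.tail_isTailOf (A : Ray Γ) (k : ℕ) : (A.tail k).IsTailOf A :=
  ⟨k, fun _ => rfl⟩

lemma Ray.tail_verts_subset (A : Ray Γ) (k : ℕ) : (A.tail k).verts ⊆ A.verts := by
  rintro _ ⟨n, rfl⟩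
  exact ⟨n + k, rfl⟩

lemma Ray.mem_tail_verts {A : Ray Γ} {k : ℕ} {v : W} :
    v ∈ (A.tail k).verts ↔ ∃ n, k ≤ n ∧ A.f n = v := by
  constructor
  · rintro ⟨n, rfl⟩
    exact ⟨n + k, by omega, rfl⟩
  · rintro ⟨n, hn, rfl⟩
    exact ⟨n - k, by simp only [Ray.tail, Nat.sub_add_cancel hn]⟩

lemma Ray.tail_verts_antitone (A : Ray Γ) : Antitone fun k => (A.tail k).verts := by
  intro k l hkl v hv
  obtain ⟨n, hn, rfl⟩ := Ray.mem_tail_verts.mp hv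
  exact Ray.mem_tail_verts.mpr ⟨n, hkl.trans hn, rfl⟩

lemma Ray.finite_verts_diff_tail (A : Ray Γ) (k : ℕ) :
    (A.verts \ (A.tail k).verts).Finite := by
  refine ((Set.finite_Iio k).image A.f).subset ?_
  rintro _ ⟨⟨n, rfl⟩, hn⟩
  exact ⟨n, not_le.mp fun hkn => hn (Ray.mem_tail_verts.mpr ⟨n, hkn, rfl⟩), rfl⟩

lemma Ray.eventually_disjoint_tail_of_finite (A : Ray Γ) {F : Set W} (hF : F.Finite) :
    ∀ᶠ k in atTop, Disjoint (A.tail k).verts F := by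
  obtain ⟨N, hN⟩ := (hF.preimage A.inj.injOn).bddAbove
  filter_upwards [eventually_gt_atTop N] with k hk
  refine Set.disjoint_left.mpr fun v hv hvF => ?_
  obtain ⟨n, hn, rfl⟩ := Ray.mem_tail_verts.mp hv
  exact absurd (hN hvF) (by omega)

lemma Ray.eventually_disjoint_tail {A B : Ray Γ} {a b : ℕ}
    (h : Disjoint (A.tail a).verts (B.tail b).verts) :
    ∀ᶠ k in atTop, Disjoint (A.tail k).verts B.verts := by
  filter_upwards [A.eventually_disjoint_tail_of_finite (B.finite_verts_diff_tail b),
    eventually_ge_atTop a] with k hF hk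
  refine Disjoint.mono_right (Set.subset_sdiff_union _ (B.tail b).verts) ?_
  exact Set.disjoint_union_right.mpr ⟨hF, h.mono_left (A.tail_verts_antitone hk)⟩

def PathBetween.withEnds {A B A' B' : Set W} (P : PathBetween Γ A B)
    (hA : P.first ∈ A') (hB : P.last ∈ B') : PathBetween Γ A' B' :=
  ⟨P.first, P.last, P.walk, P.isPath, hA, hB⟩

@[simp]
lemma PathBetween.verts_withEnds {A B A' B' : Set W} (P : PathBetween Γ A B)
    (hA : P.first ∈ A') (hB : P.last ∈ B') : (P.withEnds hA hB).verts = P.verts :=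
  rfl

lemma PathBetween.first_mem_verts {A B : Set W} (P : PathBetween Γ A B) : P.first ∈ P.verts :=
  P.walk.start_mem_support

lemma PathBetween.last_mem_verts {A B : Set W} (P : PathBetween Γ A B) : P.last ∈ P.verts :=
  P.walk.end_mem_support

def PathBetween.reverse {A B : Set W} (P : PathBetween Γ A B) : PathBetween Γ B A :=
  ⟨P.last, P.first, P.walk.reverse, P.isPath.reverse, P.last_mem, P.first_mem⟩

@[simp]
lemma PathBetween.verts_reverse {A B : Set W} (P : PathBetween Γ A B) :
    P.reverse.verts = P.verts := by
  ext v
  simp [PathBetween.reverse, PathBetween.verts]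

lemma PathBetween.exists_prefix {A B : Set W} (P : PathBetween Γ A B) :
    ∃ Q : PathBetween Γ A B, Q.verts ⊆ P.verts ∧ ∀ v ∈ Q.verts, v ∈ B → v = Q.last := by
  classical
  obtain ⟨x, hxs, hx, hfirst⟩ := P.walk.exists_mem_support_forall_mem_support_imp_eq
    (P.walk.support.toFinset.filter (· ∈ B)) ⟨P.last, by simpa using P.last_mem⟩
  have hxB : x ∈ B := (Finset.mem_filter.mp hxs).2
  refine ⟨⟨P.first, x, P.walk.takeUntil x hx, P.isPath.takeUntil hx, P.first_mem, hxB⟩,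
    fun v hv => P.walk.support_takeUntil_subset_support hx hv, fun v hv hvB => ?_⟩
  exact hfirst v (by simpa using ⟨P.walk.support_takeUntil_subset_support hx hv, hvB⟩) hv

def InfinitelyLinked (Γ : SimpleGraph W) (X A B : Set W) : Prop :=
  ∃ P : ℕ → PathBetween Γ A B,
    (∀ n : ℕ, ∀ v ∈ (P n).verts, v ∉ X) ∧
    ∀ m n : ℕ, m ≠ n → Disjoint (P m).verts (P n).verts

lemma rayEquivAvoiding_iff {X : Set W} {A B : Ray Γ} :
    RayEquivAvoiding Γ X A B ↔ InfinitelyLinked Γ X A.verts B.verts :=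
  Iff.rfl

namespace InfinitelyLinked

variable {X A B : Set W}

lemma of_infinite {ι : Type} [Infinite ι] (P : ι → PathBetween Γ A B)
    (hX : ∀ i, ∀ v ∈ (P i).verts, v ∉ X)
    (hP : ∀ i j, i ≠ j → Disjoint (P i).verts (P j).verts) :
    InfinitelyLinked Γ X A B :=
  let e := Infinite.natEmbedding ι
  ⟨fun n => P (e n), fun n => hX (e n), fun _ _ hmn => hP _ _ (e.injective.ne hmn)⟩

lemma symm (h : InfinitelyLinked Γ X A B) : InfinitelyLinked Γ X B A := by
  obtain ⟨P, hX, hP⟩ := h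
  exact ⟨fun n => (P n).reverse, by simpa using hX, by simpa using hP⟩

lemma mono {X' A' B' : Set W} (h : InfinitelyLinked Γ X A B) (hX : X' ⊆ X)
    (hA : A \ X ⊆ A') (hB : B \ X ⊆ B') : InfinitelyLinked Γ X' A' B' := by
  obtain ⟨P, hPX, hP⟩ := h
  refine ⟨fun n => (P n).withEnds (hA ⟨(P n).first_mem, hPX n _ (P n).first_mem_verts⟩)
    (hB ⟨(P n).last_mem, hPX n _ (P n).last_mem_verts⟩), ?_, by simpa using hP⟩
  exact fun n v hv hvX => hPX n v hv (hX hvX)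

/-- A finite set meets only finitely many of the disjoint paths. -/
lemma union_finite (h : InfinitelyLinked Γ X A B) {F : Set W} (hF : F.Finite) :
    InfinitelyLinked Γ (X ∪ F) A B := by
  obtain ⟨P, hX, hP⟩ := h
  set bad : Set ℕ := {n | ∃ v ∈ F, v ∈ (P n).verts}
  have hbad : bad.Finite := by
    refine (hF.biUnion (t := fun v => {n | v ∈ (P n).verts}) fun v _ => ?_).subset
      fun n ⟨v, hvF, hv⟩ => Set.mem_biUnion hvF hv
    exact Set.Subsingleton.finite fun m hm n hn =>
      by_contra fun hmn => Set.disjoint_left.mp (hP m n hmn) hm hn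
  have : Infinite ↥badᶜ := hbad.infinite_compl.to_subtype
  refine of_infinite (fun n : ↥badᶜ => P n) ?_
    (fun i j hij => hP i j (Subtype.coe_injective.ne hij))
  rintro ⟨n, hn⟩ v hv (hvX | hvF)
  exacts [hX n v hv hvX, hn ⟨v, hvF, hv⟩]

lemma of_union {C : Set W} (h : InfinitelyLinked Γ X A (B ∪ C)) (hBC : Disjoint B C) :
    InfinitelyLinked Γ (X ∪ C) A B ∨ InfinitelyLinked Γ (X ∪ B) A C := by
  obtain ⟨P, hX, hP⟩ := h
  choose Q hQP hQlast using fun n => (P n).exists_prefix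
  have hQ : ∀ m n, m ≠ n → Disjoint (Q m).verts (Q n).verts :=
    fun m n hmn => (hP m n hmn).mono (hQP m) (hQP n)
  have hQX : ∀ n, ∀ v ∈ (Q n).verts, v ∉ X := fun n v hv => hX n v (hQP n hv)
  set toB : Set ℕ := {n | (Q n).last ∈ B}
  rcases Set.finite_or_infinite toB with hfin | hinf
  · have : Infinite ↥toBᶜ := hfin.infinite_compl.to_subtype
    have hC : ∀ n : ↥toBᶜ, (Q n).last ∈ C :=
      fun n => ((Q n).last_mem).resolve_left n.2
    refine Or.inr (of_infinite (fun n : ↥toBᶜ => (Q n).withEnds (Q n).first_mem (hC n)) ?_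
      (fun i j hij => hQ i j (Subtype.coe_injective.ne hij)))
    rintro n v hv (hvX | hvB)
    exacts [hQX n v hv hvX, Set.disjoint_left.mp hBC hvB
      (hQlast n v hv (Or.inl hvB) ▸ hC n)]
  · have : Infinite toB := hinf.to_subtype
    refine Or.inl (of_infinite (fun n : toB => (Q n).withEnds (Q n).first_mem n.2)
      ?_ (fun i j hij => hQ i j (Subtype.coe_injective.ne hij)))
    rintro ⟨n, hn⟩ v hv (hvX | hvC)
    exacts [hQX n v hv hvX, Set.disjoint_left.mp hBC
      (hQlast n v hv (Or.inr hvC) ▸ hn) hvC]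

end InfinitelyLinked

lemma SeparatesRay.symm {S R T' : Ray Γ} (h : SeparatesRay Γ S R T') : SeparatesRay Γ S T' R :=
  fun T'' R' hT hR hTS hRS hTR =>
    h R' T'' hR hT hRS hTS (rayEquivAvoiding_iff.mpr (rayEquivAvoiding_iff.mp hTR).symm)

lemma RayEquiv.not_separatesRay_or_not_separatesRay {A B C : Ray Γ} (hAB : RayEquiv Γ A B)
    (hA_B : ∀ᶠ k in atTop, Disjoint (A.tail k).verts B.verts)
    (hA_C : ∀ᶠ k in atTop, Disjoint (A.tail k).verts C.verts)
    (hB_C : ∀ᶠ k in atTop, Disjoint (B.tail k).verts C.verts)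
    (hC_B : ∀ᶠ k in atTop, Disjoint (C.tail k).verts B.verts) :
    ¬ SeparatesRay Γ C A B ∨ ¬ SeparatesRay Γ B A C := by
  obtain ⟨a, hA_B, hA_C⟩ := (hA_B.and hA_C).exists
  obtain ⟨b, hB_C⟩ := hB_C.exists
  obtain ⟨c, hC_B⟩ := hC_B.exists
  set F := (A.verts \ (A.tail a).verts) ∪ (B.verts \ (B.tail b).verts) ∪
    (C.verts \ (C.tail c).verts)
  have hF : F.Finite := ((A.finite_verts_diff_tail a).union
    (B.finite_verts_diff_tail b)).union (C.finite_verts_diff_tail c)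
  have hlinked : InfinitelyLinked Γ F (A.tail a).verts ((B.tail b).verts ∪ (C.tail c).verts) :=
    ((rayEquivAvoiding_iff.mp hAB).union_finite hF).mono (by simp)
      (fun v ⟨hv, hvF⟩ => by_contra fun hv' => hvF (.inr (.inl (.inl ⟨hv, hv'⟩))))
      (fun v ⟨hv, hvF⟩ => .inl (by_contra fun hv' => hvF (.inr (.inl (.inr ⟨hv, hv'⟩)))))
  have hB_F : B.verts ⊆ F ∪ (B.tail b).verts := (Set.subset_sdiff_union _ _).trans
    (Set.union_subset_union_left _ (Set.subset_union_right.trans Set.subset_union_left))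
  have hC_F : C.verts ⊆ F ∪ (C.tail c).verts := (Set.subset_sdiff_union _ _).trans
    (Set.union_subset_union_left _ Set.subset_union_right)
  rcases hlinked.of_union (hB_C.mono_right (C.tail_verts_subset c)) with h | h
  · exact .inl fun hsep => hsep _ _ (A.tail_isTailOf a) (B.tail_isTailOf b) hA_C hB_C
      (h.mono hC_F Set.sdiff_subset Set.sdiff_subset)
  · exact .inr fun hsep => hsep _ _ (A.tail_isTailOf a) (C.tail_isTailOf c) hA_B hC_B
      (h.mono hB_F Set.sdiff_subset Set.sdiff_subset)

end Separation

/-- If `S` separates `R` from `T'`, then `T'` does not separate `R`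
from `S` and `R` does not separate `S` from `T'`. -/
theorem separation_asymmetry
    (Γ : SimpleGraph W) (ε : Set (Ray Γ)) (hε : IsEnd Γ ε)
    (R S T' : Ray Γ) (hR : R ∈ ε) (hS : S ∈ ε) (hT : T' ∈ ε)
    (htails : ∃ a b c : ℕ,
      Disjoint (R.tail a).verts (S.tail b).verts ∧
      Disjoint (R.tail a).verts (T'.tail c).verts ∧
      Disjoint (S.tail b).verts (T'.tail c).verts)
    (hsep : SeparatesRay Γ S R T') :
    ¬ SeparatesRay Γ T' R S ∧ ¬ SeparatesRay Γ R S T' := by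
  obtain ⟨a, b, c, hRS, hRT, hST⟩ := htails
  refine ⟨fun hsep' => ?_, fun hsep' => ?_⟩
  · exact ((hε.2 R hR S).mp hS).not_separatesRay_or_not_separatesRay
      (Ray.eventually_disjoint_tail hRS) (Ray.eventually_disjoint_tail hRT)
      (Ray.eventually_disjoint_tail hST) (Ray.eventually_disjoint_tail hST.symm)
      |>.elim (· hsep') (· hsep)
  · exact ((hε.2 T' hT S).mp hS).not_separatesRay_or_not_separatesRay
      (Ray.eventually_disjoint_tail hST.symm) (Ray.eventually_disjoint_tail hRT.symm)
      (Ray.eventually_disjoint_tail hRS.symm) (Ray.eventually_disjoint_tail hRS)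
      |>.elim (· hsep'.symm) (· hsep.symm)

end Ubiquity
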